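/- Consider the Euclidean projection of z ∈ ℝ^m onto the simplex-like set {ŷ ∈ ℝ^m : ŷ ≥ 0, Σ_i ŷ_i ≤ c} (c > 0). The projection is given componentwise by ŷ_i = max(z_i − ρ/2, 0) where ρ ≥ 0 is chosen so that either ρ = 0 and Σ_i max(z_i, 0) ≤ c, or Σ_i max(z_i − ρ/2, 0) = c. -/
import Mathlib
open scoped InnerProductSpace


/-- KKT characterization of the Euclidean projection onto
`{ŷ : ŷ ≥ 0, ∑ ŷ_i ≤ c}`: if `ρ ≥ 0` satisfies either `ρ = 0` and
`∑ max(z_i, 0) ≤ c`, or `∑ max(z_i − ρ/2, 0) = c`, then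
`ŷ_i = max(z_i − ρ/2, 0)` is the (nearest-point) projection of `z`. -/
theorem stmt_16 (m : ℕ) (c : ℝ) (hc : 0 < c) (z : EuclideanSpace ℝ (Fin m))
    (ρ : ℝ) (hρ : 0 ≤ ρ)
    (hcase : (ρ = 0 ∧ ∑ i, max (z i) 0 ≤ c) ∨ (∑ i, max (z i - ρ / 2) 0 = c))
    (yhat : EuclideanSpace ℝ (Fin m)) (hyhat : ∀ i, yhat i = max (z i - ρ / 2) 0) :
    yhat ∈ {y : EuclideanSpace ℝ (Fin m) | (∀ i, 0 ≤ y i) ∧ ∑ i, y i ≤ c} ∧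
    ∀ w ∈ {y : EuclideanSpace ℝ (Fin m) | (∀ i, 0 ≤ y i) ∧ ∑ i, y i ≤ c},
      ‖yhat - z‖ ≤ ‖w - z‖ := by
  have hsum_yhat : ∑ i, yhat i = ∑ i, max (z i - ρ / 2) 0 :=
    Finset.sum_congr rfl fun i _ => hyhat i
  have hyc : ∑ i, yhat i ≤ c := by
    rcases hcase with ⟨h0, hle⟩ | heq
    · rw [hsum_yhat]
      simpa [h0] using hle
    · rw [hsum_yhat, heq]
  have hmem : (∀ i, 0 ≤ yhat i) ∧ ∑ i, yhat i ≤ c := by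
    refine ⟨fun i => ?_, hyc⟩
    rw [hyhat]; exact le_max_right _ _
  refine ⟨hmem, ?_⟩
  rintro w ⟨hw0, hwsum⟩
  -- termwise bound
  have hterm : ∀ i, ρ / 2 * (yhat i - w i) ≤ (w i - yhat i) * (yhat i - z i) := by
    intro i
    rcases le_or_gt 0 (z i - ρ / 2) with h | h
    · have : yhat i = z i - ρ / 2 := by rw [hyhat]; exact max_eq_left h
      rw [this]; ring_nf; nlinarith
    · have hy0 : yhat i = 0 := by rw [hyhat]; exact max_eq_right h.le
      rw [hy0]
      have hw := hw0 i
      nlinarith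
  have hsum : ρ / 2 * (∑ i, yhat i - ∑ i, w i) ≤ ∑ i, (w i - yhat i) * (yhat i - z i) := by
    calc ρ / 2 * (∑ i, yhat i - ∑ i, w i)
        = ∑ i, ρ / 2 * (yhat i - w i) := by
          rw [← Finset.sum_sub_distrib, Finset.mul_sum]
      _ ≤ _ := Finset.sum_le_sum fun i _ => hterm i
  have hkey : 0 ≤ ∑ i, (w i - yhat i) * (yhat i - z i) := by
    refine le_trans ?_ hsum
    rcases hcase with ⟨h0, _⟩ | heq
    · simp [h0]
    · have : ∑ i, yhat i = c := by rw [hsum_yhat, heq]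
      rw [this]
      have : 0 ≤ c - ∑ i, w i := by linarith
      positivity
  have hinner : 0 ≤ ⟪w - yhat, yhat - z⟫_ℝ := by
    rw [show ⟪w - yhat, yhat - z⟫_ℝ = ∑ i, (w i - yhat i) * (yhat i - z i) by
      simp [PiLp.inner_apply, PiLp.sub_apply, RCLike.inner_apply, mul_comm]]
    exact hkey
  have hexp : ‖w - z‖ ^ 2 = ‖w - yhat‖ ^ 2 + 2 * ⟪w - yhat, yhat - z⟫_ℝ + ‖yhat - z‖ ^ 2 := by
    rw [show w - z = (w - yhat) + (yhat - z) by abel]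
    exact norm_add_sq_real _ _
  have h2 : ‖yhat - z‖ ^ 2 ≤ ‖w - z‖ ^ 2 := by nlinarith [sq_nonneg ‖w - yhat‖]
  have := norm_nonneg (yhat - z)
  have := norm_nonneg (w - z)
  nlinarith
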